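/- Define f(C,φ) = (1 + C)/2 − C(1−C)·cos²φ and g(C,φ) = (1 + C)/2 − C(1−C)·sin²φ. Then for all C ∈ [0,1] and φ ∈ ℝ one has f(C,φ) ≥ 7/16, with equality if and only if C = 1/4 and cos²φ = 1 (i.e. φ ≡ 0 or π mod 2π); at these minimizers f(1/4, 0) = 7/16 < 1/2 while g(1/4, 0) = 5/8 > 1/2, exhibiting quadrature squeezing in X. -/

import Mathlib

noncomputable section

/-- The squared dispersion `(ΔX)²` of the coordinate quadrature in a super-coherent
state with concurrence `C` and phase `φ`. -/
noncomputable def f (C φ : ℝ) : ℝ := (1 + C) / 2 - C * (1 - C) * Real.cos φ ^ 2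

/-- The squared dispersion `(ΔP)²` of the momentum quadrature in a super-coherent
state with concurrence `C` and phase `φ`. -/
noncomputable def g (C φ : ℝ) : ℝ := (1 + C) / 2 - C * (1 - C) * Real.sin φ ^ 2

/-! Completing the square in `C` and writing `cos²φ = 1 - sin²φ` gives
`f C φ = 7/16 + (C - 1/4)² + C(1 - C) sin²φ`, a sum of two terms that are nonnegative for
`C ∈ [0,1]`; both vanish exactly when `C = 1/4` and `sin φ = 0`. -/

open Real

theorem f_eq_seven_div_sixteen_add (C φ : ℝ) :
    f C φ = 7 / 16 + (C - 1 / 4) ^ 2 + C * (1 - C) * sin φ ^ 2 := by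
  rw [f, cos_sq']
  ring

theorem mul_one_sub_mul_sin_sq_nonneg {C : ℝ} (hC0 : 0 ≤ C) (hC1 : C ≤ 1) (φ : ℝ) :
    0 ≤ C * (1 - C) * sin φ ^ 2 := by
  have : 0 ≤ 1 - C := sub_nonneg.2 hC1
  positivity

theorem seven_div_sixteen_le_f {C : ℝ} (hC0 : 0 ≤ C) (hC1 : C ≤ 1) (φ : ℝ) :
    7 / 16 ≤ f C φ := by
  rw [f_eq_seven_div_sixteen_add]
  linarith [sq_nonneg (C - 1 / 4), mul_one_sub_mul_sin_sq_nonneg hC0 hC1 φ]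

theorem f_eq_seven_div_sixteen_iff {C : ℝ} (hC0 : 0 ≤ C) (hC1 : C ≤ 1) (φ : ℝ) :
    f C φ = 7 / 16 ↔ C = 1 / 4 ∧ cos φ ^ 2 = 1 := by
  have hpyth := sin_sq_add_cos_sq φ
  rw [f_eq_seven_div_sixteen_add]
  constructor
  · intro h
    have hsq : (C - 1 / 4) ^ 2 = 0 := by
      linarith [sq_nonneg (C - 1 / 4), mul_one_sub_mul_sin_sq_nonneg hC0 hC1 φ]
    have hC : C = 1 / 4 := sub_eq_zero.1 (pow_eq_zero_iff two_ne_zero |>.1 hsq)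
    subst hC
    refine ⟨rfl, ?_⟩
    linarith
  · rintro ⟨rfl, hcos⟩
    have hsin : sin φ ^ 2 = 0 := by linarith
    rw [hsin]
    norm_num

/-- Quadrature squeezing in `X`: for all `C ∈ [0,1]` and `φ ∈ ℝ` one has
`f(C,φ) ≥ 7/16`, with equality if and only if `C = 1/4` and `cos²φ = 1`; at these
minimizers `f(1/4,0) = 7/16 < 1/2` while `g(1/4,0) = 5/8 > 1/2`. -/
theorem quadrature_squeezing (C φ : ℝ) (hC0 : 0 ≤ C) (hC1 : C ≤ 1) :
    7 / 16 ≤ f C φ ∧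
    (f C φ = 7 / 16 ↔ C = 1 / 4 ∧ Real.cos φ ^ 2 = 1) ∧
    f (1 / 4) 0 = 7 / 16 ∧ g (1 / 4) 0 = 5 / 8 ∧
    (7 : ℝ) / 16 < 1 / 2 ∧ (1 : ℝ) / 2 < 5 / 8 := by
  refine ⟨seven_div_sixteen_le_f hC0 hC1 φ, f_eq_seven_div_sixteen_iff hC0 hC1 φ,
    ?_, ?_, by norm_num, by norm_num⟩
  · norm_num [f]
  · norm_num [g]
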